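/- arXiv:1205.1814 — 2 statements merged into one kernel-verified Lean document; each statement's English description precedes it below -/
import Mathlib

section
/- Let H be a finite-dimensional Hopf algebra with invertible antipode and left integral Λ, A a left H-module algebra, B = A#H, and M, N B-modules. A B-module map f : M → N factors through the canonical map λ_M : M → M ⊗ H, m ↦ m ⊗ Λ, via a B-module map (i.e. f is null-homotopic) if and only if f = Λ·g for some A-linear map g : M → N, where (Λ·g)(m) = Λ₍₂₎·g(S⁻¹(Λ₍₁₎)·m). -/
/-!
For an `A`-linear `g : M → N`, the map `g̃ (m ⊗ h) = (h • g) m` is `A#H`-linear with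
`g̃ (m ⊗ Λ) = (Λ • g) m`. Conversely an `A#H`-linear `G : M ⊗ H → N` equals `g̃` for
`g = G (· ⊗ 1)`, because `m ⊗ h = ∑ h₂ • (S⁻¹ h₁ • m ⊗ 1)`.

The computations run on the Hopf identities for `S⁻¹`: it is anti-multiplicative (so `h ↦ h • g`
is an action) and anti-comultiplicative (so `h • g` stays `A`-linear, via the smash relations of
`M` and `N`), and `∑ h₂ S⁻¹ h₁ = ε h = ∑ S⁻¹ h₂ h₁` (which give the expansion of `m ⊗ h` above and
the `H`-linearity of `g̃`).
-/

open TensorProduct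

noncomputable section

namespace Hopfological

variable (k : Type*) [Field k]

def actL (R M : Type*) [Ring R] [Algebra k R] [AddCommGroup M] [Module k M]
    [Module R M] [IsScalarTower k R M] [SMulCommClass k R M] :
    R →ₗ[k] M →ₗ[k] M :=
  LinearMap.mk₂ k (· • ·) (fun r r' m => add_smul r r' m) (fun c r m => smul_assoc c r m)
    (fun r m m' => smul_add r m m') (fun c r m => (smul_comm c r m).symm)

@[simp] lemma actL_apply (R M : Type*) [Ring R] [Algebra k R] [AddCommGroup M] [Module k M]
    [Module R M] [IsScalarTower k R M] [SMulCommClass k R M] (r : R) (m : M) :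
    actL k R M r m = r • m := rfl

variable (H : Type*) [Ring H] [HopfAlgebra k H]

/-- `h • (m ⊗ n) = ∑ ρM h₁ m ⊗ ρN h₂ n`. -/
def tenActVia {M N : Type*} [AddCommGroup M] [Module k M] [AddCommGroup N] [Module k N]
    (ρM : H →ₗ[k] M →ₗ[k] M) (ρN : H →ₗ[k] N →ₗ[k] N) :
    H →ₗ[k] (M ⊗[k] N) →ₗ[k] (M ⊗[k] N) :=
  (TensorProduct.lift (((TensorProduct.mapBilinear (σ₁₂ := RingHom.id k) (M := M) (N := N) (M₂ := M) (N₂ := N)).comp ρM).compl₂ ρN)).comp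
    (Coalgebra.comul (R := k))

/-- `(h • f) m = ∑ ρN h₂ (f (ρM (S⁻¹ h₁) m))`, with `Sinv` playing the role of `S⁻¹`. -/
def conjAct (Sinv : H →ₗ[k] H) {M N : Type*} [AddCommGroup M] [Module k M]
    [AddCommGroup N] [Module k N]
    (ρM : H →ₗ[k] M →ₗ[k] M) (ρN : H →ₗ[k] N →ₗ[k] N) :
    H →ₗ[k] (M →ₗ[k] N) →ₗ[k] (M →ₗ[k] N) :=
  (TensorProduct.lift (LinearMap.mk₂ k
      (fun h₁ h₂ => (LinearMap.llcomp k M N N (ρN h₂)).comp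
        (LinearMap.lcomp k N (ρM (Sinv h₁))))
      (fun h₁ h₁' h₂ => by ext f m; simp)
      (fun c h₁ h₂ => by ext f m; simp)
      (fun h₁ h₂ h₂' => by ext f m; simp)
      (fun c h₁ h₂ => by ext f m; simp))).comp (Coalgebra.comul (R := k))

def IsModuleAlgebraVia (A : Type*) [Ring A] [Algebra k A]
    (ρ : H →ₗ[k] A →ₗ[k] A) : Prop :=
  (∀ (h h' : H) (a : A), ρ (h * h') a = ρ h (ρ h' a)) ∧
  (∀ a : A, ρ 1 a = a) ∧
  (∀ (h : H) (a b : A),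
    ρ h (a * b) = LinearMap.mul' k A (tenActVia k H ρ ρ h (a ⊗ₜ[k] b))) ∧
  (∀ h : H, ρ h 1 = Coalgebra.counit (R := k) h • (1 : A))

/-- `M` is an `A#H`-module: `h • (a • m) = ∑ (h₁ • a) • (h₂ • m)`. -/
def IsSmashModule (A M : Type*) [Ring A] [Algebra k A] [AddCommGroup M] [Module k M]
    [Module A M] [IsScalarTower k A M] [SMulCommClass k A M]
    [Module H A] [IsScalarTower k H A] [SMulCommClass k H A]
    [Module H M] [IsScalarTower k H M] [SMulCommClass k H M] : Prop :=
  ∀ (h : H) (a : A) (m : M),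
    h • (a • m) =
      TensorProduct.lift
        (LinearMap.mk₂ k (· • ·) (fun a a' m => add_smul a a' m)
          (fun c a m => smul_assoc c a m) (fun a m m' => smul_add a m m')
          (fun c a m => (smul_comm c a m).symm))
        (tenActVia k H (actL k H A) (actL k H M) h (a ⊗ₜ[k] m))

variable (A : Type*) [Ring A] [Algebra k A]
  [Module H A] [IsScalarTower k H A] [SMulCommClass k H A]
variable (M : Type*) [AddCommGroup M] [Module k M]
  [Module A M] [IsScalarTower k A M] [SMulCommClass k A M]
  [Module H M] [IsScalarTower k H M] [SMulCommClass k H M]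
variable (N : Type*) [AddCommGroup N] [Module k N]
  [Module A N] [IsScalarTower k A N] [SMulCommClass k A N]
  [Module H N] [IsScalarTower k H N] [SMulCommClass k H N]

/-- `g̃ (m ⊗ h) = (h • g) m = ∑ h₂ • g (S⁻¹ h₁ • m)`. -/
def tildeMap (Sinv : H →ₗ[k] H) (g : M →ₗ[k] N) : M ⊗[k] H →ₗ[k] N :=
  TensorProduct.lift (((conjAct k H Sinv (actL k H M) (actL k H N)).flip g).flip)

open Coalgebra HopfAlgebra WithConv

section Antipode

variable {R C : Type*} [CommSemiring R] [Semiring C] [HopfAlgebra R C]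

lemma comul_left_inv :
    toConv (map (antipode R) (antipode R) ∘ₗ (TensorProduct.comm R C C).toLinearMap ∘ₗ
      comul (R := R) (A := C)) * toConv (comul (R := R) (A := C)) = 1 := by
  have counit_left : ∀ (X : C ⊗[R] C →ₗ[R] C) (t : C ⊗[R] C),
      map (Algebra.linearMap R C ∘ₗ counit) X
        (TensorProduct.assoc R C C C (map comul LinearMap.id t)) = 1 ⊗ₜ X t := by
    intro X t
    induction t using TensorProduct.induction_on with
    | zero => simp
    | add x y hx hy => simp_all [tmul_add]
    | tmul y z =>
      rw [map_tmul, ← (ℛ R y).eq]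
      conv_rhs => rw [← sum_counit_smul (ℛ R y)]
      simp only [sum_tmul, map_sum, assoc_tmul, map_tmul, LinearMap.comp_apply,
        Algebra.linearMap_apply, Algebra.algebraMap_eq_smul_one, smul_tmul, LinearMap.id_apply,
        ← tmul_sum, ← map_smul, smul_tmul']
  -- the product sends `c` to `∑ S c₂ c₃ ⊗ S c₁ c₄`: contract the middle pair, then the outer one
  have hS := HopfAlgebra.mul_antipode_rTensor_comul (R := R) (A := C)
  rw [LinearMap.rTensor_def] at hS
  apply WithConv.ext
  simp only [LinearMap.convMul_def, LinearMap.convOne_def, ofConv_toConv, LinearMap.mul'_tensor]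
  simp only [coassoc_simps]
  rw [hS]
  ext c
  simp only [LinearMap.comp_apply, LinearEquiv.coe_coe, counit_left]
  simp [← LinearMap.rTensor_def, Algebra.algebraMap_eq_smul_one, Algebra.TensorProduct.one_def]

/-- `δ` has the right convolution inverse `δ ∘ S` (`LinearMap.comul_right_inv`) and the left
convolution inverse `(S ⊗ S) ∘ τ ∘ δ`, so the two agree. -/
lemma comul_antipode (c : C) :
    comul (R := R) (antipode R c) =
      map (antipode R) (antipode R) (TensorProduct.comm R C C (comul c)) := by
  have := left_inv_eq_right_inv (M := WithConv (C →ₗ[R] C ⊗[R] C))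
    comul_left_inv LinearMap.comul_right_inv
  exact (LinearMap.congr_fun (congrArg ofConv this) c).symm

end Antipode

section InverseAntipode

variable {R C : Type*} [CommSemiring R] [Semiring C] [HopfAlgebra R C] (Sinv : C →ₗ[R] C)

lemma Sinv_mul (hS₁ : ∀ c, Sinv (antipode R c) = c) (hS₂ : ∀ c, antipode R (Sinv c) = c)
    (a b : C) : Sinv (a * b) = Sinv b * Sinv a := by
  rw [← hS₁ (Sinv b * Sinv a), antipode_mul_antidistrib, hS₂, hS₂]

lemma comul_Sinv (hS₁ : ∀ c, Sinv (antipode R c) = c) (hS₂ : ∀ c, antipode R (Sinv c) = c)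
    (c : C) : comul (R := R) (Sinv c) = map Sinv Sinv (TensorProduct.comm R C C (comul c)) := by
  have h : ∀ t : C ⊗[R] C, map Sinv Sinv (TensorProduct.comm R C C
      (map (antipode R) (antipode R) (TensorProduct.comm R C C t))) = t := by
    intro t
    induction t using TensorProduct.induction_on with
    | zero => simp
    | add x y hx hy => simp_all
    | tmul u v => simp [hS₁]
  rw [← h (comul (Sinv c)), ← comul_antipode, hS₂]

lemma mul_Sinv_comul (hS₁ : ∀ c, Sinv (antipode R c) = c) (hS₂ : ∀ c, antipode R (Sinv c) = c)
    (c : C) : LinearMap.mul' R C (Sinv.lTensor C (TensorProduct.comm R C C (comul c))) =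
      algebraMap R C (counit c) := by
  apply Function.LeftInverse.injective hS₁
  -- `S` turns `∑ c₂ S⁻¹ c₁` into `∑ c₁ S c₂`
  have h : ∀ t : C ⊗[R] C, antipode R (LinearMap.mul' R C (Sinv.lTensor C
      (TensorProduct.comm R C C t))) = LinearMap.mul' R C ((antipode R).lTensor C t) := by
    intro t
    induction t using TensorProduct.induction_on with
    | zero => simp
    | add x y hx hy => simp_all
    | tmul u v => simp [antipode_mul_antidistrib, hS₂]
  rw [h, mul_antipode_lTensor_comul_apply, Algebra.algebraMap_eq_smul_one, map_smul,
    antipode_one]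

lemma Sinv_mul_comul (hS₁ : ∀ c, Sinv (antipode R c) = c) (hS₂ : ∀ c, antipode R (Sinv c) = c)
    (c : C) : LinearMap.mul' R C (Sinv.rTensor C (TensorProduct.comm R C C (comul c))) =
      algebraMap R C (counit c) := by
  apply Function.LeftInverse.injective hS₁
  have h : ∀ t : C ⊗[R] C, antipode R (LinearMap.mul' R C (Sinv.rTensor C
      (TensorProduct.comm R C C t))) = LinearMap.mul' R C ((antipode R).rTensor C t) := by
    intro t
    induction t using TensorProduct.induction_on with
    | zero => simp
    | add x y hx hy => simp_all
    | tmul u v => simp [antipode_mul_antidistrib, hS₂]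
  rw [h, mul_antipode_rTensor_comul_apply, Algebra.algebraMap_eq_smul_one, map_smul,
    antipode_one]

end InverseAntipode

lemma rTensor_assoc_symm_lTensor_comul_comul {R C A : Type*} [CommSemiring R] [AddCommMonoid C]
    [Module R C] [Coalgebra R C] [Semiring A] [Algebra R A] {κ : C ⊗[R] C →ₗ[R] A}
    (hκ : ∀ c, κ (comul c) = algebraMap R A (counit c)) (c : C) :
    κ.rTensor C ((TensorProduct.assoc R C C C).symm ((comul (R := R)).lTensor C (comul c))) =
      1 ⊗ₜ c := by
  rw [coassoc_symm_apply, ← LinearMap.rTensor_comp_apply,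
    show κ ∘ₗ comul = Algebra.linearMap R A ∘ₗ counit from LinearMap.ext hκ,
    LinearMap.rTensor_comp_apply, rTensor_counit_comul]
  simp

section ConjAct

variable {k H A M N}

lemma conjAct_flip_apply {X Y Z : Type*} [AddCommGroup X] [Module k X] [Module H X]
    [IsScalarTower k H X] [SMulCommClass k H X] [AddCommGroup Y] [Module k Y]
    [AddCommGroup Z] [Module k Z] (Sinv : H →ₗ[k] H)
    (hS₁ : ∀ h : H, Sinv (antipode k h) = h) (hS₂ : ∀ h : H, antipode k (Sinv h) = h)
    {ρY : H →ₗ[k] Y →ₗ[k] Y} {ρZ : H →ₗ[k] Z →ₗ[k] Z} {μ : X →ₗ[k] Y →ₗ[k] Z}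
    (hμ : ∀ h x y, ρZ h (μ x y) = lift μ (tenActVia k H (actL k H X) ρY h (x ⊗ₜ y)))
    (h : H) (x : X) (y : Y) :
    conjAct k H Sinv (actL k H X) ρZ h (μ.flip y) x = μ x (ρY h y) := by
  set κ := LinearMap.mul' k H ∘ₗ Sinv.lTensor H ∘ₗ (TensorProduct.comm k H H).toLinearMap
  -- `Ψ (p ⊗ w) = μ (p • x) (ρY w y)`; the left side is `∑ Ψ (h₂ S⁻¹ h₁ ⊗ h₃)`
  set Ψ : H ⊗[k] H →ₗ[k] Z := lift (μ.compl₂ (ρY.flip y) ∘ₗ (actL k H X).flip x)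
  have hκ : ∀ h, κ (comul h) = algebraMap k H (counit h) := mul_Sinv_comul Sinv hS₁ hS₂
  rw [show μ x (ρY h y) = Ψ (1 ⊗ₜ h) by simp [Ψ], ← rTensor_assoc_symm_lTensor_comul_comul hκ]
  unfold conjAct
  rw [LinearMap.comp_apply]
  generalize comul (R := k) h = t
  induction t using TensorProduct.induction_on with
  | zero => simp
  | add s t hs ht => simp_all
  | tmul u v =>
    simp only [lift.tmul, LinearMap.mk₂_apply, LinearMap.comp_apply, LinearMap.llcomp_apply,
      LinearMap.lcomp_apply, LinearMap.flip_apply, hμ]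
    unfold tenActVia
    rw [LinearMap.comp_apply, LinearMap.lTensor_tmul]
    generalize comul (R := k) v = s
    induction s using TensorProduct.induction_on with
    | zero => simp
    | add p q hp hq => simp_all [tmul_add]
    | tmul v₁ v₂ => simp [Ψ, κ, mul_smul]

lemma conjAct_comp {X Z W : Type*} [AddCommGroup X] [Module k X] [AddCommGroup Z] [Module k Z]
    [AddCommGroup W] [Module k W] (Sinv : H →ₗ[k] H) (ρX : H →ₗ[k] X →ₗ[k] X)
    {ρZ : H →ₗ[k] Z →ₗ[k] Z} {ρW : H →ₗ[k] W →ₗ[k] W} {G : Z →ₗ[k] W}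
    (hG : ∀ h z, G (ρZ h z) = ρW h (G z)) (h : H) (φ : X →ₗ[k] Z) :
    conjAct k H Sinv ρX ρW h (G ∘ₗ φ) = G ∘ₗ conjAct k H Sinv ρX ρZ h φ := by
  unfold conjAct
  rw [LinearMap.comp_apply, LinearMap.comp_apply]
  generalize comul (R := k) h = t
  induction t using TensorProduct.induction_on with
  | zero => simp
  | add s t hs ht => rw [map_add, map_add, LinearMap.add_apply, LinearMap.add_apply, hs, ht,
      LinearMap.comp_add]
  | tmul u v => ext x; simp [hG]

lemma apply_tmul_eq_conjAct (Sinv : H →ₗ[k] H)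
    (hS₁ : ∀ h : H, Sinv (antipode k h) = h) (hS₂ : ∀ h : H, antipode k (Sinv h) = h)
    {G : M ⊗[k] H →ₗ[k] N}
    (hG : ∀ (l : H) (x : M ⊗[k] H), G (tenActVia k H (actL k H M) (actL k H H) l x) = l • G x)
    (m : M) (h : H) :
    G (m ⊗ₜ h) = conjAct k H Sinv (actL k H M) (actL k H N) h (G ∘ₗ (mk k M H).flip 1) m := by
  rw [conjAct_comp Sinv _ hG, LinearMap.comp_apply,
    conjAct_flip_apply Sinv hS₁ hS₂ (μ := mk k M H) (fun _ _ _ => by rw [lift_mk]; rfl)]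
  simp

lemma conjAct_mul (Sinv : H →ₗ[k] H)
    (hS₁ : ∀ h : H, Sinv (antipode k h) = h) (hS₂ : ∀ h : H, antipode k (Sinv h) = h)
    (a b : H) (g : M →ₗ[k] N) :
    conjAct k H Sinv (actL k H M) (actL k H N) (a * b) g =
      conjAct k H Sinv (actL k H M) (actL k H N) a
        (conjAct k H Sinv (actL k H M) (actL k H N) b g) := by
  unfold conjAct
  simp only [LinearMap.comp_apply, Bialgebra.comul_mul]
  generalize comul (R := k) a = s
  generalize comul (R := k) b = t
  ext m
  induction s using TensorProduct.induction_on with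
  | zero => simp
  | add s s' hs hs' => simp_all [add_mul]
  | tmul u v =>
    induction t using TensorProduct.induction_on with
    | zero => simp
    | add t t' ht ht' => simp_all [mul_add]
    | tmul u' v' => simp [Sinv_mul Sinv hS₁ hS₂, mul_smul]

lemma tildeMap_tenActVia_tmul_one (Sinv : H →ₗ[k] H)
    (hS₁ : ∀ h : H, Sinv (antipode k h) = h) (hS₂ : ∀ h : H, antipode k (Sinv h) = h)
    (g : M →ₗ[k] N) (l : H) (m : M) :
    tildeMap k H M N Sinv g (tenActVia k H (actL k H M) (actL k H H) l (m ⊗ₜ 1)) = l • g m := by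
  set κ := LinearMap.mul' k H ∘ₗ Sinv.rTensor H ∘ₗ (TensorProduct.comm k H H).toLinearMap
  -- `Ψ (p ⊗ w) = w • g (p • m)`; the left side is `∑ Ψ (S⁻¹ l₂ l₁ ⊗ l₃)`
  set Ψ : H ⊗[k] H →ₗ[k] N := lift ((actL k H N).flip ∘ₗ g ∘ₗ (actL k H M).flip m)
  have hκ : ∀ h, κ (comul h) = algebraMap k H (counit h) := Sinv_mul_comul Sinv hS₁ hS₂
  rw [show l • g m = Ψ (1 ⊗ₜ l) by simp [Ψ], ← rTensor_assoc_symm_lTensor_comul_comul hκ]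
  unfold tenActVia
  rw [LinearMap.comp_apply]
  generalize comul (R := k) l = t
  induction t using TensorProduct.induction_on with
  | zero => simp
  | add s t hs ht => simp_all
  | tmul u v =>
    simp only [lift.tmul, LinearMap.comp_apply, LinearMap.compl₂_apply, mapBilinear_apply,
      map_tmul, actL_apply, smul_eq_mul, mul_one]
    unfold tildeMap conjAct
    simp only [lift.tmul, LinearMap.flip_apply, LinearMap.comp_apply, LinearMap.lTensor_tmul]
    generalize comul (R := k) v = s
    induction s using TensorProduct.induction_on with
    | zero => simp
    | add s t hs ht => simp_all [tmul_add]
    | tmul v₁ v₂ => simp [Ψ, κ, mul_smul]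

lemma tildeMap_tenActVia_tmul (Sinv : H →ₗ[k] H)
    (hS₁ : ∀ h : H, Sinv (antipode k h) = h) (hS₂ : ∀ h : H, antipode k (Sinv h) = h)
    (g : M →ₗ[k] N) (l h : H) (m : M) :
    tildeMap k H M N Sinv g (tenActVia k H (actL k H M) (actL k H H) l (m ⊗ₜ h)) =
      tildeMap k H M N Sinv (conjAct k H Sinv (actL k H M) (actL k H N) h g)
        (tenActVia k H (actL k H M) (actL k H H) l (m ⊗ₜ 1)) := by
  unfold tenActVia
  rw [LinearMap.comp_apply]
  generalize comul (R := k) l = t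
  induction t using TensorProduct.induction_on with
  | zero => simp
  | add s t hs ht => simp_all
  | tmul u v =>
    simp only [tildeMap, lift.tmul, LinearMap.comp_apply, LinearMap.compl₂_apply,
      mapBilinear_apply, map_tmul, actL_apply, smul_eq_mul, mul_one, LinearMap.flip_apply]
    rw [conjAct_mul Sinv hS₁ hS₂]

lemma tildeMap_tenActVia (Sinv : H →ₗ[k] H)
    (hS₁ : ∀ h : H, Sinv (antipode k h) = h) (hS₂ : ∀ h : H, antipode k (Sinv h) = h)
    (g : M →ₗ[k] N) (l : H) (x : M ⊗[k] H) :
    tildeMap k H M N Sinv g (tenActVia k H (actL k H M) (actL k H H) l x) =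
      l • tildeMap k H M N Sinv g x := by
  induction x using TensorProduct.induction_on with
  | zero => simp
  | add x y hx hy => simp_all
  | tmul m h =>
    rw [tildeMap_tenActVia_tmul Sinv hS₁ hS₂, tildeMap_tenActVia_tmul_one Sinv hS₁ hS₂]
    rfl

lemma conjAct_apply_smul (Sinv : H →ₗ[k] H)
    (hS₁ : ∀ h : H, Sinv (antipode k h) = h) (hS₂ : ∀ h : H, antipode k (Sinv h) = h)
    (hM : IsSmashModule k H A M) (hN : IsSmashModule k H A N)
    {g : M →ₗ[k] N} (hg : ∀ (a : A) (m : M), g (a • m) = a • g m) (h : H) (a : A) (m : M) :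
    conjAct k H Sinv (actL k H M) (actL k H N) h g (a • m) =
      a • conjAct k H Sinv (actL k H M) (actL k H N) h g m := by
  set Θ : H ⊗[k] H →ₗ[k] N := g ∘ₗ lift (actL k A M) ∘ₗ
    map ((actL k H A).flip a ∘ₗ Sinv) ((actL k H M).flip m ∘ₗ Sinv) ∘ₗ
    (TensorProduct.comm k H H).toLinearMap
  -- `Φ ((u ⊗ v) ⊗ w) = w • g ((S⁻¹ v • a) • (S⁻¹ u • m))`; both sides are `Φ` of `Δ² h`
  set Φ : (H ⊗[k] H) ⊗[k] H →ₗ[k] N := lift ((actL k H N).flip ∘ₗ Θ)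
  have lhs : conjAct k H Sinv (actL k H M) (actL k H N) h g (a • m) =
      Φ ((comul (R := k)).rTensor H (comul h)) := by
    unfold conjAct
    rw [LinearMap.comp_apply]
    generalize comul (R := k) h = t
    induction t using TensorProduct.induction_on with
    | zero => simp
    | add s t hs ht => simp_all
    | tmul u v =>
      simp only [lift.tmul, LinearMap.mk₂_apply, LinearMap.comp_apply, LinearMap.llcomp_apply,
        LinearMap.lcomp_apply, actL_apply, LinearMap.rTensor_tmul]
      rw [hM]
      unfold tenActVia
      rw [LinearMap.comp_apply, comul_Sinv Sinv hS₁ hS₂]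
      generalize comul (R := k) u = s
      induction s using TensorProduct.induction_on with
      | zero => simp
      | add s t hs ht => simp_all [add_tmul]
      | tmul u₁ u₂ => simp [Φ, Θ]
  have rhs : a • conjAct k H Sinv (actL k H M) (actL k H N) h g m =
      Φ ((TensorProduct.assoc k H H H).symm ((comul (R := k)).lTensor H (comul h))) := by
    unfold conjAct
    rw [LinearMap.comp_apply]
    generalize comul (R := k) h = t
    induction t using TensorProduct.induction_on with
    | zero => simp
    | add s t hs ht => simp_all
    | tmul u v =>
      simp only [lift.tmul, LinearMap.mk₂_apply, LinearMap.comp_apply, LinearMap.llcomp_apply,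
        LinearMap.lcomp_apply, actL_apply, LinearMap.lTensor_tmul]
      -- `a • (v • n) = ∑ v₂ • ((S⁻¹ v₁ • a) • n)`
      rw [← actL_apply k H N, ← actL_apply k A N,
        ← conjAct_flip_apply Sinv hS₁ hS₂ (ρY := actL k H N) (ρZ := actL k H N)
          (μ := actL k A N) (fun _ _ _ => hN _ _ _)]
      unfold conjAct
      rw [LinearMap.comp_apply]
      generalize comul (R := k) v = s
      induction s using TensorProduct.induction_on with
      | zero => simp
      | add s t hs ht => simp_all [tmul_add]
      | tmul v₁ v₂ => simp [Φ, Θ, hg]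
  rw [lhs, rhs, coassoc_symm_apply]

end ConjAct

theorem nullhomotopic_iff_integral_action
    (Sinv : H →ₗ[k] H)
    (hS₁ : ∀ h : H, Sinv (HopfAlgebra.antipode (R := k) h) = h)
    (hS₂ : ∀ h : H, HopfAlgebra.antipode (R := k) (Sinv h) = h)
    (Λ : H)
    (hM : IsSmashModule k H A M) (hN : IsSmashModule k H A N)
    (f : M →ₗ[k] N) :
    (∃ G : M ⊗[k] H →ₗ[k] N,
        (∀ (a : A) (m : M) (h : H), G ((a • m) ⊗ₜ[k] h) = a • G (m ⊗ₜ[k] h)) ∧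
        (∀ (l : H) (x : M ⊗[k] H),
            G (tenActVia k H (actL k H M) (actL k H H) l x) = l • G x) ∧
        (∀ m : M, G (m ⊗ₜ[k] Λ) = f m)) ↔
      (∃ g : M →ₗ[k] N, (∀ (a : A) (m : M), g (a • m) = a • g m) ∧
        f = conjAct k H Sinv (actL k H M) (actL k H N) Λ g) := by
  constructor
  · rintro ⟨G, hGA, hGH, hGΛ⟩
    refine ⟨G ∘ₗ (mk k M H).flip 1, fun a m => hGA a m 1, ?_⟩
    ext m
    rw [← hGΛ, apply_tmul_eq_conjAct Sinv hS₁ hS₂ hGH]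
  · rintro ⟨g, hg, rfl⟩
    exact ⟨tildeMap k H M N Sinv g, fun a m h => conjAct_apply_smul Sinv hS₁ hS₂ hM hN hg h a m,
      tildeMap_tenActVia Sinv hS₁ hS₂ g, fun m => rfl⟩

end Hopfological
end
end

section
/- Let H be a finite-dimensional Hopf algebra acting on an H-module algebra A with left integral Λ, and B = A#H. If there exists an element x ∈ A with Λ·x = 1, then the identity map of A factors through λ_A : A → A ⊗ H, a ↦ a ⊗ Λ; concretely, the B-module map r : A ⊗ H → A, a ⊗ h ↦ (h₍₂₎·(S⁻¹(h₍₁₎)·a · x)) satisfies r(a ⊗ Λ) = a for all a ∈ A. In particular A is a direct summand of A ⊗ H as a B-module. -/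
open TensorProduct

noncomputable section

namespace Hopfological

variable (k : Type*) [Field k]

variable (H : Type*) [Ring H] [HopfAlgebra k H]

variable (A : Type*) [Ring A] [Algebra k A]
  [Module H A] [IsScalarTower k H A] [SMulCommClass k H A]

/-- The retraction `r : A ⊗ H → A`, `a ⊗ h ↦ ∑ h₂ • ((S⁻¹(h₁) • a) * x)`, obtained from
right multiplication by `x`. -/
def retrMap (Sinv : H →ₗ[k] H) (x : A) : A ⊗[k] H →ₗ[k] A :=
  TensorProduct.lift
    ((TensorProduct.lift
        (LinearMap.mk₂ k
          (fun h₁ h₂ =>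
            (actL k H A h₂) ∘ₗ (LinearMap.mulRight k x) ∘ₗ (actL k H A (Sinv h₁)))
          (fun h₁ h₁' h₂ => by ext a; simp [add_mul])
          (fun c h₁ h₂ => by ext a; simp [smul_mul_assoc])
          (fun h₁ h₂ h₂' => by ext a; simp)
          (fun c h₁ h₂ => by ext a; simp)) ∘ₗ (Coalgebra.comul (R := k))).flip)

/-!
Everything rests on the identity `r (a ⊗ h) = a * (h • x)`. The module-algebra rule turns
`h₂ • ((S⁻¹ h₁ • a) * x)` into `∑ (h₂ S⁻¹(h₁) • a) * (h₃ • x)`, and after coassociativity the first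
two legs collapse by `∑ h₂ S⁻¹(h₁) = ε(h) 1`, which is the image under `S⁻¹` of the antipode
axiom `∑ h₁ S(h₂) = ε(h) 1`. Left `A`-linearity and `H`-linearity of `r` are then read off, and
`r (a ⊗ Λ) = a * (Λ • x) = a`.
-/

section Sweedler

open Coalgebra HopfAlgebra

variable {k H A}

lemma sum_mul_Sinv_eq_smul {Sinv : H →ₗ[k] H}
    (hS₁ : Function.LeftInverse Sinv (antipode k)) (hS₂ : Function.RightInverse Sinv (antipode k))
    {ι : Type*} {h : H} (r : Coalgebra.Repr k h ι) :
    ∑ i ∈ r.index, r.right i * Sinv (r.left i) = counit (R := k) h • (1 : H) := by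
  apply hS₁.injective
  rw [map_sum, map_smul, antipode_one, ← sum_mul_antipode_eq_smul r]
  simp only [antipode_mul_antidistrib, hS₂ _]

lemma sum_mul_Sinv_tmul_eq {Sinv : H →ₗ[k] H}
    (hS₁ : Function.LeftInverse Sinv (antipode k)) (hS₂ : Function.RightInverse Sinv (antipode k))
    {ι κ : Type*} {h : H} (r : Coalgebra.Repr k h ι) (r₂ : ∀ i, Coalgebra.Repr k (r.right i) κ) :
    ∑ i ∈ r.index, ∑ p ∈ (r₂ i).index, ((r₂ i).left p * Sinv (r.left i)) ⊗ₜ[k] (r₂ i).right p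
      = (1 : H) ⊗ₜ[k] h := by
  let θ : H ⊗[k] H →ₗ[k] H := LinearMap.mul' k H ∘ₗ (TensorProduct.comm k H H).toLinearMap ∘ₗ
    LinearMap.rTensor H Sinv
  have coassoc := congr(LinearMap.rTensor H θ ((TensorProduct.assoc k H H H).symm
    $(sum_tmul_tmul_eq r (fun i => ℛ k (r.left i)) r₂)))
  simp only [map_sum, TensorProduct.assoc_symm_tmul, θ, LinearMap.coe_comp, LinearEquiv.coe_coe, Function.comp_apply,
    LinearMap.rTensor_tmul, TensorProduct.comm_tmul, LinearMap.mul'_apply] at coassoc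
  rw [← coassoc]
  simp_rw [← TensorProduct.sum_tmul, sum_mul_Sinv_eq_smul hS₁ hS₂, TensorProduct.smul_tmul,
    ← TensorProduct.tmul_sum, sum_counit_smul]

lemma tenActVia_tmul {M N : Type*} [AddCommGroup M] [Module k M] [AddCommGroup N] [Module k N]
    (ρM : H →ₗ[k] M →ₗ[k] M) (ρN : H →ₗ[k] N →ₗ[k] N) {ι : Type*} {l : H}
    (r : Coalgebra.Repr k l ι) (m : M) (n : N) :
    tenActVia k H ρM ρN l (m ⊗ₜ[k] n) = ∑ i ∈ r.index, ρM (r.left i) m ⊗ₜ[k] ρN (r.right i) n := by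
  simp [tenActVia, ← r.eq, map_sum]

lemma retrMap_tmul (Sinv : H →ₗ[k] H) (x a : A) {ι : Type*} {h : H} (r : Coalgebra.Repr k h ι) :
    retrMap k H A Sinv x (a ⊗ₜ[k] h) = ∑ i ∈ r.index, r.right i • ((Sinv (r.left i) • a) * x) := by
  simp [retrMap, ← r.eq, map_sum]

lemma smul_mul_eq_sum (hA : IsModuleAlgebraVia k H A (actL k H A)) {ι : Type*} {h : H}
    (r : Coalgebra.Repr k h ι) (u v : A) :
    h • (u * v) = ∑ i ∈ r.index, (r.left i • u) * (r.right i • v) := by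
  simpa [tenActVia_tmul _ _ r, map_sum] using hA.2.2.1 h u v

lemma retrMap_tmul_eq_mul_smul {Sinv : H →ₗ[k] H}
    (hS₁ : Function.LeftInverse Sinv (antipode k)) (hS₂ : Function.RightInverse Sinv (antipode k))
    (hA : IsModuleAlgebraVia k H A (actL k H A)) (x a : A) (h : H) :
    retrMap k H A Sinv x (a ⊗ₜ[k] h) = a * (h • x) := by
  let F : H →ₗ[k] H →ₗ[k] A :=
    (LinearMap.mul k A).compl₁₂ ((actL k H A).flip a) ((actL k H A).flip x)
  let r₂ := fun i => ℛ k ((ℛ k h).right i)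
  calc retrMap k H A Sinv x (a ⊗ₜ[k] h)
      = ∑ i ∈ (ℛ k h).index, ∑ p ∈ (r₂ i).index,
          (((r₂ i).left p * Sinv ((ℛ k h).left i)) • a) * ((r₂ i).right p • x) := by
        simp [retrMap_tmul Sinv x a (ℛ k h), smul_mul_eq_sum hA (r₂ _), mul_smul]
    _ = TensorProduct.lift F (∑ i ∈ (ℛ k h).index, ∑ p ∈ (r₂ i).index,
          ((r₂ i).left p * Sinv ((ℛ k h).left i)) ⊗ₜ[k] (r₂ i).right p) := by
        simp [F, map_sum]
    _ = a * (h • x) := by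
        simp [sum_mul_Sinv_tmul_eq hS₁ hS₂ (ℛ k h) r₂, F]

lemma retrMap_tenActVia {Sinv : H →ₗ[k] H}
    (hS₁ : Function.LeftInverse Sinv (antipode k)) (hS₂ : Function.RightInverse Sinv (antipode k))
    (hA : IsModuleAlgebraVia k H A (actL k H A)) (x : A) (l : H) (y : A ⊗[k] H) :
    retrMap k H A Sinv x (tenActVia k H (actL k H A) (actL k H H) l y)
      = l • retrMap k H A Sinv x y := by
  induction y using TensorProduct.induction_on with
  | zero => simp
  | tmul a h =>
    simp only [tenActVia_tmul _ _ (ℛ k l), map_sum, retrMap_tmul_eq_mul_smul hS₁ hS₂ hA,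
      smul_mul_eq_sum hA (ℛ k l), actL_apply, smul_eq_mul, mul_smul]
  | add u v hu hv => simp only [map_add, hu, hv, smul_add]

end Sweedler

theorem retraction_of_integral_hits_one
    (Sinv : H →ₗ[k] H)
    (hS₁ : ∀ h : H, Sinv (HopfAlgebra.antipode (R := k) h) = h)
    (hS₂ : ∀ h : H, HopfAlgebra.antipode (R := k) (Sinv h) = h)
    (hA : IsModuleAlgebraVia k H A (actL k H A))
    (Λ : H)
    (x : A) (hx : Λ • x = 1) :
    (∀ (b a : A) (h : H),
        retrMap k H A Sinv x ((b * a) ⊗ₜ[k] h) = b * retrMap k H A Sinv x (a ⊗ₜ[k] h)) ∧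
    (∀ (l : H) (y : A ⊗[k] H),
        retrMap k H A Sinv x (tenActVia k H (actL k H A) (actL k H H) l y)
          = l • retrMap k H A Sinv x y) ∧
    (∀ a : A, retrMap k H A Sinv x (a ⊗ₜ[k] Λ) = a) := by
  have retr := retrMap_tmul_eq_mul_smul hS₁ hS₂ hA x
  refine ⟨fun b a h => ?_, retrMap_tenActVia hS₁ hS₂ hA x, fun a => ?_⟩
  · rw [retr, retr, mul_assoc]
  · rw [retr, hx, mul_one]

end Hopfological
end
end
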